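/- Suppose U ⊆ V ⊆ ℕ. With γ = 17/16, μ_U, μ_V, σ_U, σ_V as before, define μ(0) = 1 and μ^α(n+1) = (1+σ_V(n+1))/(1+σ_U(n+1)) − (1+σ_V(n))/(1+σ_U(n)). Assume 0 ∈ V \ U. Then for all n ≥ 1: (γ−1)/(n+2)³ ≤ μ^α(n) ≤ 1. -/

import Mathlib

open Set

noncomputable def muA (U : Set ℕ) (n : ℕ) : ℝ :=
  if n = 0 then 1 else (17 / 16 : ℝ) ^ (U ∩ Set.Iio ⌊1 + Real.log n⌋₊).ncard

noncomputable def sigmaA (U : Set ℕ) (n : ℕ) : ℝ := ∑ i ∈ Finset.Icc 1 n, muA U i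

/-! Write `A = 1 + σ_V(k)`, `B = 1 + σ_U(k)`, `u = μ_U(k+1)` and `v = μ_V(k+1)`, so that
`μ^α(k+1) = (v B - u A) / (B (B + u))`. Since `U ⊆ V`, `μ_V(i) = γ^{e(i)} μ_U(i)` where `e(i)`
counts the elements of `V \ U` below `⌊1 + log i⌋`; `e` is monotone, and `e ≥ 1` because
`0 ∈ V \ U`. Hence `v = γ^e u` and `A - 1 ≤ γ^e (B - 1)` for `e = e(k+1)`, which gives
`v B - u A ≥ u (γ^e - 1) ≥ γ - 1`. As `log γ ≤ 1/16`, `μ(n)² ≤ γ^{2⌊1 + log n⌋} ≤ n + 2`; this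
bounds the denominator by `(k+1)(k+2)(k+3)` and gives `v ≤ B + u`. -/

noncomputable def logLevel (n : ℕ) : ℕ := ⌊1 + Real.log n⌋₊

lemma logLevel_mono : Monotone logLevel := by
  intro a b hab
  have hlog : Real.log a ≤ Real.log b := by
    rcases a.eq_zero_or_pos with rfl | ha
    · simpa using Real.log_natCast_nonneg b
    · exact Real.log_le_log (by exact_mod_cast ha) (by exact_mod_cast hab)
  exact Nat.floor_le_floor (by linarith)

lemma one_le_logLevel (n : ℕ) : 1 ≤ logLevel n :=
  Nat.le_floor (by simpa using Real.log_natCast_nonneg n)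

lemma pow_two_mul_logLevel_le (n : ℕ) : (17 / 16 : ℝ) ^ (2 * logLevel n) ≤ n + 2 := by
  have hlogγ : Real.log (17 / 16) ≤ 1 / 16 := by
    linarith [Real.log_le_sub_one_of_pos (by norm_num : (0 : ℝ) < 17 / 16)]
  have hlevel : (logLevel n : ℝ) ≤ 1 + Real.log n :=
    Nat.floor_le (by linarith [Real.log_natCast_nonneg n])
  have hlog2 : 1 / 2 ≤ Real.log (n + 2) := by
    have h := Real.one_sub_inv_le_log_of_pos (by positivity : (0 : ℝ) < n + 2)
    have : ((n : ℝ) + 2)⁻¹ ≤ 1 / 2 := by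
      rw [inv_le_comm₀ (by positivity) (by norm_num)]; norm_num
    linarith
  have hlogn : Real.log n ≤ Real.log (n + 2) := by
    rcases n.eq_zero_or_pos with rfl | hn
    · simpa using Real.log_natCast_nonneg 2
    · exact Real.log_le_log (by exact_mod_cast hn) (by linarith)
  rw [← Real.log_le_log_iff (by positivity) (by positivity), Real.log_pow]
  push_cast
  nlinarith [Real.log_pos (by norm_num : (1 : ℝ) < 17 / 16)]

lemma muA_eq_pow {U : Set ℕ} {n : ℕ} (hn : n ≠ 0) :
    muA U n = (17 / 16 : ℝ) ^ (U ∩ Iio (logLevel n)).ncard := by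
  simp [muA, hn, logLevel]

lemma one_le_muA (U : Set ℕ) (n : ℕ) : 1 ≤ muA U n := by
  unfold muA
  split_ifs
  exacts [le_rfl, one_le_pow₀ (by norm_num)]

lemma muA_sq_le (U : Set ℕ) (n : ℕ) : muA U n ^ 2 ≤ n + 2 := by
  rcases eq_or_ne n 0 with rfl | hn
  · norm_num [muA]
  calc muA U n ^ 2 = (17 / 16 : ℝ) ^ (2 * (U ∩ Iio (logLevel n)).ncard) := by
        rw [muA_eq_pow hn, ← pow_mul, mul_comm]
    _ ≤ (17 / 16 : ℝ) ^ (2 * logLevel n) := by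
        gcongr
        · norm_num
        · simpa using ncard_inter_le_ncard_right U (Iio (logLevel n))
    _ ≤ n + 2 := pow_two_mul_logLevel_le n

lemma muA_le_sqrt {U : Set ℕ} {n N : ℕ} (hn : n ≤ N) : muA U n ≤ √(N + 2) := by
  rw [Real.le_sqrt (by linarith [one_le_muA U n]) (by positivity)]
  exact (muA_sq_le U n).trans (by gcongr)

lemma sigmaA_succ (U : Set ℕ) (n : ℕ) : sigmaA U (n + 1) = sigmaA U n + muA U (n + 1) :=
  Finset.sum_Icc_succ_top (by omega) _

lemma natCast_le_sigmaA (U : Set ℕ) (n : ℕ) : (n : ℝ) ≤ sigmaA U n := by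
  calc (n : ℝ) = ∑ _i ∈ Finset.Icc 1 n, (1 : ℝ) := by simp
    _ ≤ sigmaA U n := Finset.sum_le_sum fun i _ => one_le_muA U i

lemma one_add_sigmaA_pos (U : Set ℕ) (n : ℕ) : 0 < 1 + sigmaA U n := by
  linarith [natCast_le_sigmaA U n, (Nat.cast_nonneg n : (0 : ℝ) ≤ n)]

lemma one_add_sigmaA_le {U : Set ℕ} {n N : ℕ} (hn : n ≤ N) :
    1 + sigmaA U n ≤ (n + 1) * √(N + 2) := by
  have hsum : sigmaA U n ≤ n * √(N + 2) := by
    have := Finset.sum_le_card_nsmul (Finset.Icc 1 n) (muA U) _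
      fun i hi => muA_le_sqrt (U := U) ((Finset.mem_Icc.mp hi).2.trans hn)
    simpa [sigmaA] using this
  have hone : 1 ≤ √(N + 2) := Real.one_le_sqrt.mpr (by linarith [(Nat.cast_nonneg N : (0 : ℝ) ≤ N)])
  linarith

lemma one_add_sigmaA_mul_succ_le (U : Set ℕ) (k : ℕ) :
    (1 + sigmaA U k) * (1 + sigmaA U (k + 1)) ≤ (((k + 1 : ℕ) : ℝ) + 2) ^ 3 := by
  have hsq : √((k + 1 : ℕ) + 2) ^ 2 = (k : ℝ) + 3 := by
    rw [Real.sq_sqrt (by positivity)]; push_cast; ring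
  calc (1 + sigmaA U k) * (1 + sigmaA U (k + 1))
      ≤ ((k + 1) * √((k + 1 : ℕ) + 2)) * (((k + 1 : ℕ) + 1) * √((k + 1 : ℕ) + 2)) :=
        mul_le_mul (one_add_sigmaA_le k.le_succ) (one_add_sigmaA_le le_rfl)
          (one_add_sigmaA_pos U _).le (by positivity)
    _ = (k + 1) * (k + 2) * (k + 3) := by rw [mul_mul_mul_comm, ← sq, hsq]; push_cast; ring
    _ ≤ (((k + 1 : ℕ) : ℝ) + 2) ^ 3 := by push_cast; nlinarith

lemma ncard_inter_Iio_eq_add {U V : Set ℕ} (hUV : U ⊆ V) (m : ℕ) :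
    (V ∩ Iio m).ncard = (U ∩ Iio m).ncard + ((V \ U) ∩ Iio m).ncard := by
  rw [← ncard_inter_add_ncard_sdiff_eq_ncard (V ∩ Iio m) U ((finite_Iio m).inter_of_right V)]
  congr 2 <;> ext x <;> simp only [mem_inter_iff, mem_sdiff] <;> grind

lemma muA_eq_mul_pow_of_subset {U V : Set ℕ} (hUV : U ⊆ V) {n : ℕ} (hn : n ≠ 0) :
    muA V n = muA U n * (17 / 16 : ℝ) ^ ((V \ U) ∩ Iio (logLevel n)).ncard := by
  rw [muA_eq_pow hn, muA_eq_pow hn, ncard_inter_Iio_eq_add hUV, pow_add]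

lemma muA_le_pow_mul_muA {U V : Set ℕ} (hUV : U ⊆ V) {i n : ℕ} (hi : i ≤ n) :
    muA V i ≤ (17 / 16 : ℝ) ^ ((V \ U) ∩ Iio (logLevel n)).ncard * muA U i := by
  rcases eq_or_ne i 0 with rfl | hi0
  · simpa [muA] using one_le_pow₀ (by norm_num : (1 : ℝ) ≤ 17 / 16)
  rw [muA_eq_mul_pow_of_subset hUV hi0, mul_comm]
  refine mul_le_mul_of_nonneg_right (pow_le_pow_right₀ (by norm_num) ?_)
    (zero_le_one.trans (one_le_muA U i))
  exact ncard_le_ncard (inter_subset_inter_right _ (Iio_subset_Iio (logLevel_mono hi)))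
    ((finite_Iio _).inter_of_right _)

lemma sigmaA_le_pow_mul_sigmaA {U V : Set ℕ} (hUV : U ⊆ V) {k n : ℕ} (hk : k ≤ n) :
    sigmaA V k ≤ (17 / 16 : ℝ) ^ ((V \ U) ∩ Iio (logLevel n)).ncard * sigmaA U k := by
  rw [sigmaA, sigmaA, Finset.mul_sum]
  exact Finset.sum_le_sum fun i hi => muA_le_pow_mul_muA hUV ((Finset.mem_Icc.mp hi).2.trans hk)

lemma le_pow_ncard_diff_inter_Iio {U V : Set ℕ} (h0V : 0 ∈ V) (h0U : 0 ∉ U) (n : ℕ) :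
    (17 / 16 : ℝ) ≤ (17 / 16 : ℝ) ^ ((V \ U) ∩ Iio (logLevel n)).ncard := by
  refine le_self_pow₀ (by norm_num) ((ncard_pos ((finite_Iio _).inter_of_right _)).mpr ?_).ne'
  exact ⟨0, ⟨h0V, h0U⟩, one_le_logLevel n⟩

lemma sub_one_le_increment_numerator {U V : Set ℕ} (hUV : U ⊆ V) (h0V : 0 ∈ V) (h0U : 0 ∉ U)
    (k : ℕ) :
    (17 / 16 : ℝ) - 1 ≤ muA V (k + 1) * (1 + sigmaA U k) - muA U (k + 1) * (1 + sigmaA V k) := by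
  set c := (17 / 16 : ℝ) ^ ((V \ U) ∩ Iio (logLevel (k + 1))).ncard
  have hv : muA V (k + 1) = muA U (k + 1) * c := muA_eq_mul_pow_of_subset hUV k.succ_ne_zero
  have hσ : sigmaA V k ≤ c * sigmaA U k := sigmaA_le_pow_mul_sigmaA hUV k.le_succ
  have hc : 17 / 16 ≤ c := le_pow_ncard_diff_inter_Iio h0V h0U _
  have hu : 1 ≤ muA U (k + 1) := one_le_muA U _
  rw [hv]
  nlinarith [mul_le_mul_of_nonneg_left hσ (by linarith : 0 ≤ muA U (k + 1))]

lemma muA_succ_le_one_add_sigmaA (U V : Set ℕ) (k : ℕ) : muA V (k + 1) ≤ 1 + sigmaA U (k + 1) := by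
  have hsq : muA V (k + 1) ^ 2 ≤ ((k : ℝ) + 2) ^ 2 := by
    have := muA_sq_le V (k + 1); push_cast at this; nlinarith
  have := natCast_le_sigmaA U (k + 1)
  push_cast at this
  linarith [le_of_pow_le_pow_left₀ two_ne_zero (by positivity) hsq]

/-- The increments `μ^α(n)` of `(1+σ_V)/(1+σ_U)` satisfy `(γ−1)/(n+2)³ ≤ μ^α(n) ≤ 1`. -/
theorem stmt19 (U V : Set ℕ) (hUV : U ⊆ V) (h0V : 0 ∈ V) (h0U : 0 ∉ U) :
    let μα : ℕ → ℝ := fun n =>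
      (1 + sigmaA V n) / (1 + sigmaA U n) - (1 + sigmaA V (n - 1)) / (1 + sigmaA U (n - 1))
    ∀ n : ℕ, 1 ≤ n →
      ((17 / 16 : ℝ) - 1) / ((n : ℝ) + 2) ^ 3 ≤ μα n ∧ μα n ≤ 1 := by
  intro μα n hn
  obtain ⟨k, rfl⟩ := Nat.exists_eq_add_of_le' hn
  have hB := one_add_sigmaA_pos U k
  have hB' := one_add_sigmaA_pos U (k + 1)
  have hμ : μα (k + 1) = (muA V (k + 1) * (1 + sigmaA U k) - muA U (k + 1) * (1 + sigmaA V k)) /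
      ((1 + sigmaA U k) * (1 + sigmaA U (k + 1))) := by
    simp only [μα, Nat.add_sub_cancel]
    rw [div_sub_div _ _ hB'.ne' hB.ne', sigmaA_succ, sigmaA_succ]
    ring
  rw [hμ]
  constructor
  · calc ((17 / 16 : ℝ) - 1) / (((k + 1 : ℕ) : ℝ) + 2) ^ 3
        ≤ ((17 / 16 : ℝ) - 1) / ((1 + sigmaA U k) * (1 + sigmaA U (k + 1))) :=
          div_le_div_of_nonneg_left (by norm_num) (by positivity)
            (one_add_sigmaA_mul_succ_le U k)
      _ ≤ _ := div_le_div_of_nonneg_right (sub_one_le_increment_numerator hUV h0V h0U k)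
          (by positivity)
  · rw [div_le_one (by positivity)]
    nlinarith [mul_le_mul_of_nonneg_left (muA_succ_le_one_add_sigmaA U V k) hB.le,
      mul_pos (zero_lt_one.trans_le (one_le_muA U (k + 1))) (one_add_sigmaA_pos V k)]
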